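/- Let T be a tree on a finite vertex set V with at least 4 vertices and let Σ be a positive definite real matrix indexed by V whose conditional independence structure is given by T. Let i₁, i₂, i₃, i₄ be four distinct vertices. Then the four vertices form a star shape (i.e., there is NO vertex k of T such that some connected component of T with k deleted contains exactly two of the four vertices) if and only if Σ_{i₁i₃}·Σ_{i₂i₄} = Σ_{i₁i₄}·Σ_{i₂i₃}, Σ_{i₂i₁}·Σ_{i₃i₄} = Σ_{i₃i₁}·Σ_{i₂i₄}, and Σ_{i₂i₁}·Σ_{i₃i₄} = Σ_{i₄i₁}·Σ_{i₂i₃}. -/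

import Mathlib

open Matrix

/-- `S` has conditional independence structure given by the simple graph `G`. -/
def CondIndepStruct {V : Type*} [Fintype V] [DecidableEq V]
    (S : Matrix V V ℝ) (G : SimpleGraph V) : Prop :=
  ∀ i j : V, i ≠ j → (S⁻¹ i j ≠ 0 ↔ G.Adj i j)

/-- `x` and `y` lie in a common connected component of `T` with `k` deleted
(the subgraph of `T` induced on `V \ {k}`). -/
def SameComp {V : Type*} (T : SimpleGraph V) (k x y : V) : Prop :=
  ∃ (hx : x ≠ k) (hy : y ≠ k),
    (T.induce {v : V | v ≠ k}).Reachable ⟨x, hx⟩ ⟨y, hy⟩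

/-- Some connected component of `T` with `k` deleted contains `x` and `y` but
neither `z` nor `w`. -/
def PairSplit {V : Type*} (T : SimpleGraph V) (k x y z w : V) : Prop :=
  SameComp T k x y ∧ ¬ SameComp T k x z ∧ ¬ SameComp T k x w

/-- Four distinct vertices form a non-star shape: there is a vertex `k` of `T`
such that some connected component of `T` with `k` deleted contains exactly two
of the four vertices. -/
def NonStar {V : Type*} (T : SimpleGraph V) (i₁ i₂ i₃ i₄ : V) : Prop :=
  ∃ k : V,
    PairSplit T k i₁ i₂ i₃ i₄ ∨ PairSplit T k i₁ i₃ i₂ i₄ ∨ PairSplit T k i₁ i₄ i₂ i₃ ∨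
    PairSplit T k i₂ i₃ i₁ i₄ ∨ PairSplit T k i₂ i₄ i₁ i₃ ∨ PairSplit T k i₃ i₄ i₁ i₂

open SimpleGraph
set_option linter.unusedSectionVars false
set_option linter.unusedVariables false


section LA
variable {V : Type*} [Fintype V] [DecidableEq V]

lemma sum_eq_subtype {A : Set V} [DecidablePred (· ∈ A)] (f : V → ℝ)
    (h : ∀ v, v ∉ A → f v = 0) : ∑ v, f v = ∑ a : A, f a.1 := by
  classical
  rw [← Finset.sum_filter_of_ne (s := Finset.univ) (p := (· ∈ A))
    (by intro x _ hf; by_contra h'; exact hf (h x h'))]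
  exact Finset.sum_subtype _ (by simp) f

lemma posDef_submatrix {M : Matrix V V ℝ} (hM : M.PosDef) (A : Set V)
    [DecidablePred (· ∈ A)] :
    (M.submatrix (Subtype.val : A → V) Subtype.val).PosDef := by
  classical
  refine Matrix.PosDef.of_dotProduct_mulVec_pos ?_ ?_
  · ext i j
    simpa [Matrix.conjTranspose_apply, Matrix.submatrix_apply] using
      congrFun (congrFun hM.isHermitian i.1) j.1
  · intro x hx
    set x' : V → ℝ := fun v => if h : v ∈ A then x ⟨v, h⟩ else 0 with hx'def
    have hx0 : x' ≠ 0 := by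
      intro h
      apply hx
      ext a
      have := congrFun h a.1
      simpa [hx'def, a.2] using this
    have hx'A : ∀ a : A, x' a.1 = x a := by intro a; simp [hx'def, a.2]
    have key : dotProduct (star x') (M *ᵥ x') =
        dotProduct (star x) ((M.submatrix (Subtype.val : A → V) Subtype.val) *ᵥ x) := by
      simp only [dotProduct, mulVec, star_trivial, Matrix.submatrix_apply]
      rw [sum_eq_subtype (A := A) (fun v => x' v * ∑ u, M v u * x' u)
        (by intro v hv; simp [hx'def, hv])]
      refine Finset.sum_congr rfl fun a _ => ?_
      rw [hx'A a]
      congr 1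
      rw [sum_eq_subtype (A := A) (fun u => M a.1 u * x' u)
        (by intro v hv; simp [hx'def, hv])]
      exact Finset.sum_congr rfl fun b _ => by rw [hx'A b]
    have := hM.dotProduct_mulVec_pos hx0
    rw [key] at this
    exact this

lemma posDef_kernel {n : Type*} [Fintype n] {N : Matrix n n ℝ} (hN : N.PosDef) {x : n → ℝ}
    (hx : N *ᵥ x = 0) : x = 0 := by
  by_contra h
  have := hN.dotProduct_mulVec_pos h
  rw [hx] at this
  simp at this

lemma sep_matrix {M : Matrix V V ℝ} (hM : M.PosDef) (A : Set V) [DecidablePred (· ∈ A)]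
    {k j : V} (hk : k ∉ A) (hj : j ∉ A)
    (hB : ∀ a ∈ A, ∀ b, b ∉ A → b ≠ k → M⁻¹ a b = 0) :
    ∀ i ∈ A, M k k * M i j = M i k * M k j := by
  classical
  set K := M⁻¹ with hK
  have hdet : IsUnit M.det := isUnit_iff_ne_zero.mpr hM.det_pos.ne'
  have hKM : K * M = 1 := Matrix.nonsing_inv_mul M hdet
  set y : V → ℝ := fun l => M k k * M l j - M l k * M k j with hy
  have hyk : y k = 0 := by simp [hy]
  have hsum : ∀ a ∈ A, ∑ l, K a l * y l = 0 := by
    intro a ha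
    have haj : a ≠ j := fun h => hj (h ▸ ha)
    have hak : a ≠ k := fun h => hk (h ▸ ha)
    have h1 : ∑ l, K a l * M l j = 0 := by
      have := congrFun (congrFun hKM a) j
      rw [Matrix.mul_apply] at this
      rw [this, Matrix.one_apply_ne haj]
    have h2 : ∑ l, K a l * M l k = 0 := by
      have := congrFun (congrFun hKM a) k
      rw [Matrix.mul_apply] at this
      rw [this, Matrix.one_apply_ne hak]
    have : ∑ l, K a l * y l
        = M k k * (∑ l, K a l * M l j) - (∑ l, K a l * M l k) * M k j := by
      rw [Finset.mul_sum, Finset.sum_mul, ← Finset.sum_sub_distrib]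
      exact Finset.sum_congr rfl fun l _ => by simp [hy]; ring
    rw [this, h1, h2]; ring
  set N := K.submatrix (Subtype.val : A → V) Subtype.val with hN
  have hNpd : N.PosDef := posDef_submatrix hM.inv A
  set z : A → ℝ := fun a => y a.1 with hz
  have hNz : N *ᵥ z = 0 := by
    funext a
    have hv : ∀ v, v ∉ A → K a.1 v * y v = 0 := by
      intro v hvA
      by_cases hvk : v = k
      · subst hvk; rw [hyk]; ring
      · rw [hB a.1 a.2 v hvA hvk]; ring
    have := sum_eq_subtype (A := A) (fun l => K a.1 l * y l) hv
    simp only [Matrix.mulVec, dotProduct, hN, Matrix.submatrix_apply, Pi.zero_apply]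
    rw [← this, hsum a.1 a.2]
  have hz0 : z = 0 := posDef_kernel hNpd hNz
  intro i hi
  have := congrFun hz0 ⟨i, hi⟩
  simp only [hz, Pi.zero_apply] at this
  have : y i = 0 := this
  simpa [hy, sub_eq_zero] using this

lemma posDef_symm_apply {M : Matrix V V ℝ} (hM : M.PosDef) (a b : V) : M a b = M b a := by
  have := congrFun (congrFun hM.isHermitian a) b
  simpa [Matrix.conjTranspose_apply] using this.symm

lemma block_inv_zero {M : Matrix V V ℝ} (hM : M.PosDef) (A : Set V) [DecidablePred (· ∈ A)]
    (hblock : ∀ a ∈ A, ∀ b, b ∉ A → M a b = 0) {u v : V} (hu : u ∉ A) (hv : v ∈ A) :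
    M⁻¹ u v = 0 := by
  classical
  set K := M⁻¹ with hK
  have hdet : IsUnit M.det := isUnit_iff_ne_zero.mpr hM.det_pos.ne'
  have hMK : M * K = 1 := Matrix.mul_nonsing_inv M hdet
  set A' : Set V := {w | w ∉ A} with hA'
  have hmem : ∀ w : V, w ∈ A' ↔ w ∉ A := fun w => Iff.rfl
  set N := M.submatrix (Subtype.val : A' → V) Subtype.val with hN
  have hNpd : N.PosDef := posDef_submatrix hM A'
  set z : A' → ℝ := fun a => K a.1 v with hz
  have hNz : N *ᵥ z = 0 := by
    funext b
    have hbv : b.1 ≠ v := fun h => ((hmem b.1).mp b.2) (h ▸ hv)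
    have h1 : ∑ l, M b.1 l * K l v = 0 := by
      have := congrFun (congrFun hMK b.1) v
      rw [Matrix.mul_apply] at this
      rw [this, Matrix.one_apply_ne hbv]
    have hvan : ∀ l, l ∉ A' → M b.1 l * K l v = 0 := by
      intro l hl
      have hlA : l ∈ A := not_not.mp (fun h => hl ((hmem l).mpr h))
      rw [posDef_symm_apply hM b.1 l, hblock l hlA b.1 ((hmem b.1).mp b.2)]
      ring
    have := sum_eq_subtype (A := A') (fun l => M b.1 l * K l v) hvan
    simp only [Matrix.mulVec, dotProduct, hN, Matrix.submatrix_apply, Pi.zero_apply]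
    rw [← this, h1]
  have hz0 : z = 0 := posDef_kernel hNpd hNz
  have := congrFun hz0 ⟨u, (hmem u).mpr hu⟩
  simpa [hz] using this

end LA


section Graph
variable {V : Type*} {T : SimpleGraph V}

lemma sameComp_refl {k x : V} (hx : x ≠ k) : SameComp T k x x := ⟨hx, hx, Reachable.refl _⟩

lemma SameComp.symm {k x y : V} (h : SameComp T k x y) : SameComp T k y x := by
  obtain ⟨hx, hy, hr⟩ := h
  exact ⟨hy, hx, hr.symm⟩

lemma SameComp.trans {k x y z : V} (h1 : SameComp T k x y) (h2 : SameComp T k y z) :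
    SameComp T k x z := by
  obtain ⟨hx, hy, hr⟩ := h1
  obtain ⟨hy', hz, hr'⟩ := h2
  exact ⟨hx, hz, hr.trans hr'⟩

lemma sameComp_of_adj {k x y : V} (hx : x ≠ k) (hy : y ≠ k) (h : T.Adj x y) :
    SameComp T k x y :=
  ⟨hx, hy, Adj.reachable (by simpa using h)⟩

lemma reachable_of_walk {k : V} {a b : V} (w : T.Walk a b) (hw : ∀ v ∈ w.support, v ≠ k) :
    ∀ (ha : a ≠ k) (hb : b ≠ k),
    (T.induce {v : V | v ≠ k}).Reachable ⟨a, ha⟩ ⟨b, hb⟩ := by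
  induction w with
  | nil => intro ha hb; exact Reachable.refl _
  | @cons u c b h p ih =>
      intro ha hb
      have hc : c ≠ k := hw c (by simp [SimpleGraph.Walk.support_cons])
      have hadj : (T.induce {v : V | v ≠ k}).Adj ⟨u, ha⟩ ⟨c, hc⟩ := by simpa using h
      exact hadj.reachable.trans
        (ih (fun v hv => hw v (by simp [SimpleGraph.Walk.support_cons, hv])) hc hb)

lemma sameComp_iff_walk {k x y : V} :
    SameComp T k x y ↔ ∃ (_ : x ≠ k) (_ : y ≠ k) (w : T.Walk x y), k ∉ w.support := by
  constructor
  · rintro ⟨hx, hy, hr⟩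
    obtain ⟨w'⟩ := hr
    refine ⟨hx, hy, w'.map (SimpleGraph.Embedding.induce {v : V | v ≠ k}).toHom, ?_⟩
    show k ∉ (w'.map (SimpleGraph.Embedding.induce {v : V | v ≠ k}).toHom).support
    rw [SimpleGraph.Walk.support_map]
    intro hk
    obtain ⟨a, _, ha2⟩ := List.mem_map.mp hk
    exact a.2 ha2
  · rintro ⟨hx, hy, w, hw⟩
    exact ⟨hx, hy, reachable_of_walk w (fun v hv hvk => hw (by rw [← hvk]; exact hv)) hx hy⟩

lemma not_sameComp_of_mem_path [DecidableEq V] (hT : T.IsTree) {x y k : V} (p : T.Walk x y) (hp : p.IsPath)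
    (hk : k ∈ p.support) : ¬ SameComp T k x y := by
  intro hsc
  rw [sameComp_iff_walk] at hsc
  obtain ⟨hx, hy, w, hw⟩ := hsc
  have huniq : (⟨p, hp⟩ : T.Path x y) = w.toPath := hT.IsAcyclic.path_unique _ _
  have : k ∈ (w.toPath : T.Walk x y).support := by
    rw [← huniq]; exact hk
  exact hw (SimpleGraph.Walk.support_toPath_subset w this)

end Graph

section Median
variable {V : Type*} [DecidableEq V] {T : SimpleGraph V}

lemma not_sameComp_left {k b : V} : ¬ SameComp T k k b := by rintro ⟨hx, -, -⟩; exact hx rfl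

lemma not_sameComp_right {a k : V} : ¬ SameComp T k a k := by rintro ⟨-, hy, -⟩; exact hy rfl

lemma base_case (hT : T.IsTree) {x y z : V} (h : T.Adj x y) :
    ∃ m, ¬SameComp T m x y ∧ ¬SameComp T m x z ∧ ¬SameComp T m y z := by
  by_cases hxyz : SameComp T x y z
  · refine ⟨y, not_sameComp_right, ?_, not_sameComp_left⟩
    intro hc
    rw [sameComp_iff_walk] at hc
    obtain ⟨hx, hz, w, hw⟩ := hc
    have hyw : y ∉ (w.toPath : T.Walk x z).support :=
      fun hy => hw (SimpleGraph.Walk.support_toPath_subset w hy)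
    have hP : (SimpleGraph.Walk.cons h.symm (w.toPath : T.Walk x z)).IsPath :=
      (w.toPath.2).cons hyw
    exact (not_sameComp_of_mem_path hT _ hP (by
      simp [SimpleGraph.Walk.support_cons])) hxyz
  · exact ⟨x, not_sameComp_left, not_sameComp_left, hxyz⟩

lemma median_exists (hT : T.IsTree) {x y : V} (p : T.Walk x y) (hp : p.IsPath) (z : V)
    (hyz : y ≠ z) :
    ∃ m, ¬SameComp T m x y ∧ ¬SameComp T m x z ∧ ¬SameComp T m y z := by
  induction p with
  | nil => exact ⟨_, not_sameComp_left, not_sameComp_left, not_sameComp_left⟩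
  | @cons x v1 y h q ih =>
    rw [SimpleGraph.Walk.cons_isPath_iff] at hp
    obtain ⟨hq, hxq⟩ := hp
    by_cases hv1y : v1 = y
    · subst hv1y; exact base_case hT h
    by_cases hzv1 : z = v1
    · subst hzv1
      refine ⟨z, ?_, not_sameComp_right, not_sameComp_right⟩
      exact not_sameComp_of_mem_path hT (SimpleGraph.Walk.cons h q) (by
          rw [SimpleGraph.Walk.cons_isPath_iff]; exact ⟨hq, hxq⟩)
        (by simp [SimpleGraph.Walk.support_cons, SimpleGraph.Walk.start_mem_support])
    have hsep_xy : ¬SameComp T v1 x y :=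
      not_sameComp_of_mem_path hT (SimpleGraph.Walk.cons h q) (by
          rw [SimpleGraph.Walk.cons_isPath_iff]; exact ⟨hq, hxq⟩)
        (by simp [SimpleGraph.Walk.support_cons, SimpleGraph.Walk.start_mem_support])
    by_cases hc1 : SameComp T v1 x z
    · refine ⟨x, not_sameComp_left, not_sameComp_left, ?_⟩
      intro hxyz
      obtain ⟨hxv1, hzv1', W1, hW1⟩ := sameComp_iff_walk.mp hc1
      obtain ⟨hyx, hzx, W, hW⟩ := sameComp_iff_walk.mp hxyz
      -- v1 ∈ W.support
      set C := W.append W1.reverse with hC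
      have hCpath := hT.IsAcyclic.path_unique C.toPath
        ⟨(SimpleGraph.Walk.cons h q).reverse,
          ((SimpleGraph.Walk.cons_isPath_iff h q).mpr ⟨hq, hxq⟩).reverse⟩
      have hv1C : v1 ∈ (C.toPath : T.Walk y x).support := by
        rw [hCpath]
        simp [SimpleGraph.Walk.support_reverse, SimpleGraph.Walk.support_cons,
          SimpleGraph.Walk.start_mem_support]
      have hv1C' : v1 ∈ C.support := SimpleGraph.Walk.support_toPath_subset C hv1C
      have hv1W : v1 ∈ W.support := by
        rcases (SimpleGraph.Walk.mem_support_append_iff _ _).mp hv1C' with h' | h'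
        · exact h'
        · exfalso
          rw [SimpleGraph.Walk.support_reverse] at h'
          exact hW1 (List.mem_reverse.mp h')
      set W' := W.dropUntil v1 hv1W with hW'
      have hxW' : x ∉ W'.support :=
        fun hx => hW (SimpleGraph.Walk.support_dropUntil_subset W hv1W hx)
      have hxW'' : x ∉ (W'.toPath : T.Walk v1 z).support :=
        fun hx => hxW' (SimpleGraph.Walk.support_toPath_subset W' hx)
      have hP2 : (SimpleGraph.Walk.cons h (W'.toPath : T.Walk v1 z)).IsPath :=
        (W'.toPath.2).cons hxW''
      exact not_sameComp_of_mem_path hT _ hP2 (by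
        simp [SimpleGraph.Walk.support_cons, SimpleGraph.Walk.start_mem_support]) hc1
    by_cases hc2 : SameComp T v1 y z
    · obtain ⟨m, hm1, hm2, hm3⟩ := ih hq hyz
      have hmv1 : m ≠ v1 := by rintro rfl; exact hm3 hc2
      by_cases hmx : m = x
      · subst hmx; exact ⟨m, not_sameComp_left, not_sameComp_left, hm3⟩
      · have hedge : SameComp T m x v1 :=
          sameComp_of_adj (fun hh => hmx hh.symm) (fun hh => hmv1 hh.symm) h
        refine ⟨m, ?_, ?_, hm3⟩
        · exact fun hc => hm1 (hedge.symm.trans hc)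
        · exact fun hc => hm2 (hedge.symm.trans hc)
    · exact ⟨v1, hsep_xy, hc1, hc2⟩

end Median

section Main
variable {V : Type*} [Fintype V] [DecidableEq V] {T : SimpleGraph V}
  {Sig : Matrix V V ℝ}

lemma diag_pos (hPD : Sig.PosDef) (k : V) : 0 < Sig k k := by
  have := hPD.dotProduct_mulVec_pos (x := Pi.single k 1) (by
    intro h
    have := congrFun h k
    simp at this)
  simpa [Matrix.mulVec_single, single_dotProduct] using this

lemma minor_pos (hPD : Sig.PosDef) {a b : V} (hab : a ≠ b) :
    Sig a b * Sig b a < Sig a a * Sig b b := by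
  set x : V → ℝ := Pi.single a (Sig b b) - Pi.single b (Sig a b) with hx
  have hxa : x a = Sig b b := by
    simp [hx, Pi.sub_apply, Pi.single_eq_same, Pi.single_eq_of_ne hab]
  have hxne : x ≠ 0 := by
    intro h
    have := congrFun h a
    rw [hxa] at this
    exact (diag_pos hPD b).ne' this
  have hpos := hPD.dotProduct_mulVec_pos hxne
  have hsym : Sig b a = Sig a b := posDef_symm_apply hPD b a
  have hdot : dotProduct (star x) (Sig *ᵥ x) =
      Sig b b * (Sig a a * Sig b b - Sig a b * Sig b a) := by
    rw [star_trivial, hx]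
    rw [Matrix.mulVec_sub, Matrix.mulVec_single, Matrix.mulVec_single]
    rw [sub_dotProduct, single_dotProduct, single_dotProduct]
    simp only [Pi.sub_apply, Pi.smul_apply, op_smul_eq_mul, Matrix.col_apply]
    rw [hsym]
    ring
  rw [hdot] at hpos
  have hb := diag_pos hPD b
  by_contra hcon
  push_neg at hcon
  nlinarith [hpos, hb, hcon]

variable (hT : T.IsTree) (hPD : Sig.PosDef) (hCI : CondIndepStruct Sig T)
include hT hPD hCI

lemma sep_entry {k x y : V} (hsep : ¬ SameComp T k x y) :
    Sig k k * Sig x y = Sig x k * Sig k y := by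
  classical
  by_cases hxk : x = k
  · subst hxk; ring
  by_cases hyk : y = k
  · subst hyk; ring
  set A : Set V := {v | SameComp T k x v} with hA
  have hxA : x ∈ A := sameComp_refl hxk
  have hkA : k ∉ A := fun h => not_sameComp_right h
  have hyA : y ∉ A := hsep
  have hB : ∀ a ∈ A, ∀ b, b ∉ A → b ≠ k → Sig⁻¹ a b = 0 := by
    intro a ha b hb hbk
    have hab : a ≠ b := fun h => hb (h ▸ ha)
    by_contra hne
    have hadj : T.Adj a b := (hCI a b hab).mp hne
    have hak : a ≠ k := by
      obtain ⟨-, h2, -⟩ := (ha : SameComp T k x a); exact h2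
    exact hb ((ha : SameComp T k x a).trans (sameComp_of_adj hak hbk hadj))
  exact sep_matrix hPD A hkA hyA hB x hxA

lemma edge_nonzero {u v : V} (h : T.Adj u v) : Sig u v ≠ 0 := by
  classical
  intro h0
  set A : Set V := {w | SameComp T u v w} with hA
  have hvu : v ≠ u := h.ne'
  have hvA : v ∈ A := sameComp_refl hvu
  have huA : u ∉ A := fun hc => not_sameComp_right hc
  have hSvb : ∀ b, b ∉ A → Sig v b = 0 := by
    intro b hb
    by_cases hbu : b = u
    · rw [hbu, posDef_symm_apply hPD v u]; exact h0
    · have := sep_entry hT hPD hCI (hb : ¬ SameComp T u v b)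
      have h2 : Sig v u = 0 := by rw [posDef_symm_apply hPD v u]; exact h0
      rw [h2, zero_mul] at this
      exact (mul_eq_zero.mp this).resolve_left (diag_pos hPD u).ne'
  have hSua : ∀ a ∈ A, Sig u a = 0 := by
    intro a ha
    by_cases hav : a = v
    · subst hav; exact h0
    · have hsep : ¬ SameComp T v u a := by
        intro hc
        obtain ⟨hv2, ha2, W2, hW2⟩ := sameComp_iff_walk.mp (ha : SameComp T u v a)
        have huW : u ∉ (W2.toPath : T.Walk v a).support :=
          fun hx => hW2 (SimpleGraph.Walk.support_toPath_subset W2 hx)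
        have hP : (SimpleGraph.Walk.cons h (W2.toPath : T.Walk v a)).IsPath :=
          (W2.toPath.2).cons huW
        exact not_sameComp_of_mem_path hT _ hP (by
          simp [SimpleGraph.Walk.support_cons, SimpleGraph.Walk.start_mem_support]) hc
      have := sep_entry hT hPD hCI hsep
      rw [h0, zero_mul] at this
      exact (mul_eq_zero.mp this).resolve_left (diag_pos hPD v).ne'
  have hblock : ∀ a ∈ A, ∀ b, b ∉ A → Sig a b = 0 := by
    intro a ha b hb
    by_cases hav : a = v
    · subst hav; exact hSvb b hb
    by_cases hbu : b = u
    · rw [hbu, posDef_symm_apply hPD a u]; exact hSua a ha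
    · have hsep : ¬ SameComp T u a b := by
        intro hc
        exact hb ((ha : SameComp T u v a).trans hc)
      have := sep_entry hT hPD hCI hsep
      have h2 : Sig a u = 0 := by rw [posDef_symm_apply hPD a u]; exact hSua a ha
      rw [h2, zero_mul] at this
      exact (mul_eq_zero.mp this).resolve_left (diag_pos hPD u).ne'
  have hzero : Sig⁻¹ u v = 0 := block_inv_zero hPD A hblock huA hvA
  exact (hCI u v h.ne).mpr h hzero

lemma entry_nonzero_aux {x y : V} (p : T.Walk x y) (hp : p.IsPath) (hxy : x ≠ y) :
    Sig x y ≠ 0 := by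
  induction p with
  | nil => exact absurd rfl hxy
  | @cons x v1 y h q ih =>
    rw [SimpleGraph.Walk.cons_isPath_iff] at hp
    obtain ⟨hq, hxq⟩ := hp
    by_cases hv1y : v1 = y
    · subst hv1y; exact edge_nonzero hT hPD hCI h
    · have hsep : ¬SameComp T v1 x y :=
        not_sameComp_of_mem_path hT (SimpleGraph.Walk.cons h q)
          ((SimpleGraph.Walk.cons_isPath_iff h q).mpr ⟨hq, hxq⟩)
          (by simp [SimpleGraph.Walk.support_cons, SimpleGraph.Walk.start_mem_support])
      have heq := sep_entry hT hPD hCI hsep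
      intro h0
      rw [h0, mul_zero] at heq
      rcases mul_eq_zero.mp heq.symm with h1 | h1
      · exact edge_nonzero hT hPD hCI h h1
      · exact ih hq hv1y h1

lemma entry_nonzero {x y : V} (hxy : x ≠ y) : Sig x y ≠ 0 := by
  obtain ⟨w⟩ := hT.isConnected.preconnected x y
  exact entry_nonzero_aux hT hPD hCI (w.toPath : T.Walk x y) w.toPath.2 hxy

lemma sameComp_factor {k x y : V} (hsc : SameComp T k x y) (hxy : x ≠ y) :
    ∃ c : ℝ, 0 ≤ c ∧ c < Sig k k ∧ Sig x k * Sig k y = Sig x y * c := by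
  obtain ⟨hxk, hyk, -⟩ := id hsc
  obtain ⟨w⟩ := hT.isConnected.preconnected x y
  obtain ⟨m, hm1, hm2, hm3⟩ := median_exists hT (w.toPath : T.Walk x y) w.toPath.2 k hyk
  have hmk : m ≠ k := by rintro rfl; exact hm1 hsc
  have S1 := sep_entry hT hPD hCI hm1
  have S2 := sep_entry hT hPD hCI hm2
  have S3 := sep_entry hT hPD hCI hm3
  have hmm := diag_pos hPD m
  refine ⟨Sig m k * Sig m k / Sig m m, div_nonneg (mul_self_nonneg _) hmm.le, ?_, ?_⟩
  · have hminor := minor_pos hPD hmk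
    rw [posDef_symm_apply hPD k m] at hminor
    rw [div_lt_iff₀ hmm]
    nlinarith [hminor]
  · -- Sig x k * Sig k y = Sig x y * (Sig m k)^2 / Sig m m
    have hsym1 : Sig k y = Sig y k := posDef_symm_apply hPD k y
    have hsym2 : Sig y m = Sig m y := posDef_symm_apply hPD y m
    have hsym3 : Sig x m = Sig m x := posDef_symm_apply hPD x m
    have hsym4 : Sig k m = Sig m k := posDef_symm_apply hPD k m
    have h4 : Sig m m * (Sig m m * (Sig x k * Sig y k)) =
        Sig m m * (Sig x y * (Sig m k * Sig m k)) := by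
      calc Sig m m * (Sig m m * (Sig x k * Sig y k))
          = (Sig m m * Sig x k) * (Sig m m * Sig y k) := by ring
        _ = (Sig x m * Sig m k) * (Sig y m * Sig m k) := by rw [S2, S3]
        _ = (Sig x m * Sig m y) * (Sig m k * Sig m k) := by rw [hsym2]; ring
        _ = (Sig m m * Sig x y) * (Sig m k * Sig m k) := by rw [← S1]
        _ = Sig m m * (Sig x y * (Sig m k * Sig m k)) := by ring
    have h5 := mul_left_cancel₀ hmm.ne' h4
    rw [hsym1]
    field_simp
    linear_combination h5

end Main

section Final
variable {V : Type*} [Fintype V] [DecidableEq V] {T : SimpleGraph V}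
  {Sig : Matrix V V ℝ}
variable (hT : T.IsTree) (hPD : Sig.PosDef) (hCI : CondIndepStruct Sig T)
include hT hPD hCI

lemma key_ineq {k x y z w : V} (hxy : SameComp T k x y) (hxz : ¬SameComp T k x z)
    (hxw : ¬SameComp T k x w) (hxy' : x ≠ y) (hzw : z ≠ w) :
    Sig x y * Sig z w ≠ Sig x z * Sig y w := by
  have hyz : ¬SameComp T k y z := fun hc => hxz (hxy.trans hc)
  have hyw : ¬SameComp T k y w := fun hc => hxw (hxy.trans hc)
  have hkk := diag_pos hPD k
  have Fxz : Sig k k * Sig x z = Sig x k * Sig k z := sep_entry hT hPD hCI hxz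
  have Fyw : Sig k k * Sig y w = Sig y k * Sig k w := sep_entry hT hPD hCI hyw
  obtain ⟨c, hc0, hck, hfac⟩ := sameComp_factor hT hPD hCI hxy hxy'
  have s1 : Sig k z = Sig z k := posDef_symm_apply hPD k z
  have s2 : Sig y k = Sig k y := posDef_symm_apply hPD y k
  have hxyne : Sig x y ≠ 0 := entry_nonzero hT hPD hCI hxy'
  have hzwne : Sig z w ≠ 0 := entry_nonzero hT hPD hCI hzw
  intro hEq
  by_cases hzwc : SameComp T k z w
  · obtain ⟨c', hc'0, hc'k, hfac'⟩ := sameComp_factor hT hPD hCI hzwc hzw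
    have t_all : Sig k k * Sig k k * (Sig x z * Sig y w) = (Sig x y * Sig z w) * (c * c') := by
      calc Sig k k * Sig k k * (Sig x z * Sig y w)
          = (Sig k k * Sig x z) * (Sig k k * Sig y w) := by ring
        _ = (Sig x k * Sig k z) * (Sig y k * Sig k w) := by rw [Fxz, Fyw]
        _ = (Sig x k * Sig k y) * (Sig z k * Sig k w) := by rw [s1, s2]; ring
        _ = (Sig x y * c) * (Sig z w * c') := by rw [hfac, hfac']
        _ = (Sig x y * Sig z w) * (c * c') := by ring
    have hfpos : 0 < Sig k k * Sig k k - c * c' := by nlinarith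
    have hfinal : Sig x y * Sig z w * (Sig k k * Sig k k - c * c') = 0 := by
      linear_combination Sig k k * Sig k k * hEq + t_all
    rcases mul_eq_zero.mp hfinal with h' | h'
    · exact (mul_ne_zero hxyne hzwne) h'
    · exact hfpos.ne' h'
  · have hZW : Sig k k * Sig z w = Sig z k * Sig k w := sep_entry hT hPD hCI hzwc
    have t_all : Sig k k * Sig k k * (Sig x z * Sig y w)
        = (Sig x y * Sig z w) * (c * Sig k k) := by
      calc Sig k k * Sig k k * (Sig x z * Sig y w)
          = (Sig k k * Sig x z) * (Sig k k * Sig y w) := by ring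
        _ = (Sig x k * Sig k z) * (Sig y k * Sig k w) := by rw [Fxz, Fyw]
        _ = (Sig x k * Sig k y) * (Sig z k * Sig k w) := by rw [s1, s2]; ring
        _ = (Sig x y * c) * (Sig k k * Sig z w) := by rw [hfac, ← hZW]
        _ = (Sig x y * Sig z w) * (c * Sig k k) := by ring
    have hfpos : 0 < Sig k k * Sig k k - c * Sig k k := by nlinarith
    have hfinal : Sig x y * Sig z w * (Sig k k * Sig k k - c * Sig k k) = 0 := by
      linear_combination Sig k k * Sig k k * hEq + t_all
    rcases mul_eq_zero.mp hfinal with h' | h'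
    · exact (mul_ne_zero hxyne hzwne) h'
    · exact hfpos.ne' h'

lemma star_side {i1 i2 i3 i4 : V} (h23 : i2 ≠ i3)
    (hstar : ¬ NonStar T i1 i2 i3 i4) :
    Sig i1 i3 * Sig i2 i4 = Sig i1 i4 * Sig i2 i3 ∧
    Sig i2 i1 * Sig i3 i4 = Sig i3 i1 * Sig i2 i4 ∧
    Sig i2 i1 * Sig i3 i4 = Sig i4 i1 * Sig i2 i3 := by
  obtain ⟨w⟩ := hT.isConnected.preconnected i1 i2
  obtain ⟨m, hm12, hm13, hm23⟩ :=
    median_exists hT (w.toPath : T.Walk i1 i2) w.toPath.2 i3 h23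
  have hm14 : ¬ SameComp T m i1 i4 := fun hc =>
    hstar ⟨m, Or.inr (Or.inr (Or.inl ⟨hc, hm12, hm13⟩))⟩
  have hm24 : ¬ SameComp T m i2 i4 := fun hc =>
    hstar ⟨m, Or.inr (Or.inr (Or.inr (Or.inr (Or.inl
      ⟨hc, fun h => hm12 h.symm, hm23⟩))))⟩
  have hm34 : ¬ SameComp T m i3 i4 := fun hc =>
    hstar ⟨m, Or.inr (Or.inr (Or.inr (Or.inr (Or.inr
      ⟨hc, fun h => hm13 h.symm, fun h => hm23 h.symm⟩))))⟩
  have hmm := (diag_pos hPD m).ne'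
  have F13 := sep_entry hT hPD hCI hm13
  have F24 := sep_entry hT hPD hCI hm24
  have F14 := sep_entry hT hPD hCI hm14
  have F23 := sep_entry hT hPD hCI hm23
  have F21 := sep_entry hT hPD hCI (fun h => hm12 h.symm)
  have F34 := sep_entry hT hPD hCI hm34
  have F31 := sep_entry hT hPD hCI (fun h => hm13 h.symm)
  have F41 := sep_entry hT hPD hCI (fun h => hm14 h.symm)
  have v13 : Sig i1 i3 = Sig i1 m * Sig m i3 / Sig m m := by
    rw [eq_div_iff hmm]; linear_combination F13
  have v24 : Sig i2 i4 = Sig i2 m * Sig m i4 / Sig m m := by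
    rw [eq_div_iff hmm]; linear_combination F24
  have v14 : Sig i1 i4 = Sig i1 m * Sig m i4 / Sig m m := by
    rw [eq_div_iff hmm]; linear_combination F14
  have v23 : Sig i2 i3 = Sig i2 m * Sig m i3 / Sig m m := by
    rw [eq_div_iff hmm]; linear_combination F23
  have v21 : Sig i2 i1 = Sig i2 m * Sig m i1 / Sig m m := by
    rw [eq_div_iff hmm]; linear_combination F21
  have v34 : Sig i3 i4 = Sig i3 m * Sig m i4 / Sig m m := by
    rw [eq_div_iff hmm]; linear_combination F34
  have v31 : Sig i3 i1 = Sig i3 m * Sig m i1 / Sig m m := by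
    rw [eq_div_iff hmm]; linear_combination F31
  have v41 : Sig i4 i1 = Sig i4 m * Sig m i1 / Sig m m := by
    rw [eq_div_iff hmm]; linear_combination F41
  have t1 : Sig i1 m = Sig m i1 := posDef_symm_apply hPD i1 m
  have t2 : Sig i2 m = Sig m i2 := posDef_symm_apply hPD i2 m
  have t3 : Sig i3 m = Sig m i3 := posDef_symm_apply hPD i3 m
  have t4 : Sig i4 m = Sig m i4 := posDef_symm_apply hPD i4 m
  rw [t1] at v13 v14
  rw [t2] at v21 v23 v24
  rw [t3] at v31 v34
  rw [t4] at v41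
  refine ⟨?_, ?_, ?_⟩
  · rw [v13, v24, v14, v23]; field_simp
  · rw [v21, v34, v31, v24]; field_simp
  · rw [v21, v34, v41, v23]; field_simp

end Final


theorem stmt_16 {V : Type*} [Fintype V] [DecidableEq V]
    (T : SimpleGraph V) (hTree : T.IsTree) (hcard : 4 ≤ Fintype.card V)
    (Sig : Matrix V V ℝ) (hPD : Sig.PosDef) (hCI : CondIndepStruct Sig T)
    (i₁ i₂ i₃ i₄ : V)
    (h12 : i₁ ≠ i₂) (h13 : i₁ ≠ i₃) (h14 : i₁ ≠ i₄)
    (h23 : i₂ ≠ i₃) (h24 : i₂ ≠ i₄) (h34 : i₃ ≠ i₄) :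
    ¬ NonStar T i₁ i₂ i₃ i₄ ↔
      (Sig i₁ i₃ * Sig i₂ i₄ = Sig i₁ i₄ * Sig i₂ i₃ ∧
        Sig i₂ i₁ * Sig i₃ i₄ = Sig i₃ i₁ * Sig i₂ i₄ ∧
        Sig i₂ i₁ * Sig i₃ i₄ = Sig i₄ i₁ * Sig i₂ i₃) := by
  have s : ∀ a b : V, Sig a b = Sig b a := fun a b => posDef_symm_apply hPD a b
  constructor
  · intro hstar
    exact star_side hTree hPD hCI h23 hstar
  · rintro ⟨E1, E2, E3⟩ hNS
    rw [s i₂ i₁, s i₃ i₁] at E2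
    rw [s i₂ i₁, s i₄ i₁] at E3
    -- E2 : Sig i₁ i₂ * Sig i₃ i₄ = Sig i₁ i₃ * Sig i₂ i₄
    -- E3 : Sig i₁ i₂ * Sig i₃ i₄ = Sig i₁ i₄ * Sig i₂ i₃
    obtain ⟨k, hk⟩ := hNS
    rcases hk with h | h | h | h | h | h <;> obtain ⟨hxy, hxz, hxw⟩ := h
    · exact key_ineq hTree hPD hCI hxy hxz hxw h12 h34 E2
    · exact key_ineq hTree hPD hCI hxy hxz hxw h13 h24 E2.symm
    · refine key_ineq hTree hPD hCI hxy hxz hxw h14 h23 ?_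
      rw [s i₄ i₃]; exact E3.symm
    · refine key_ineq hTree hPD hCI hxy hxz hxw h23 h14 ?_
      rw [s i₂ i₁]; linear_combination -E3
    · refine key_ineq hTree hPD hCI hxy hxz hxw h24 h13 ?_
      rw [s i₂ i₁, s i₄ i₃]; linear_combination -E2
    · refine key_ineq hTree hPD hCI hxy hxz hxw h34 h12 ?_
      rw [s i₃ i₁, s i₄ i₂]; linear_combination E2
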